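/- arXiv:2210.04611 — 9 statements merged into one kernel-verified Lean document; each statement's English description precedes it below -/
import Mathlib

section
/- Let Λ = ℤ[t,t⁻¹], let M be a Λ-module, N a submodule of M, I a nonempty set, m_i ∈ M (i ∈ I) elements with m_i − m_j ∈ N for all i, j ∈ I, and for each i ∈ I let X_i be a submodule of N with (1−t)·X_i = 0. Then the set Q(N,(m_i),(X_i)), the disjoint union of the quotients Q_i = N/X_i over i ∈ I, equipped with the operation x ▷ y = m_j − m_i + t·x + (1−t)·y + X_i for x ∈ Q_i and y ∈ Q_j, is a medial quandle. -/
open LaurentPolynomial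

set_option synthInstance.maxHeartbeats 1000000
set_option maxHeartbeats 1000000

noncomputable section

/-- The ring `Λ = ℤ[t,t⁻¹]` of Laurent polynomials with integer coefficients. -/
abbrev Λ : Type := LaurentPolynomial ℤ

/-- The variable `t ∈ Λ`. -/
abbrev tL : Λ := T 1

/-- A medial quandle structure on a type `Q`: an idempotent binary operation whose right
translations are bijections, satisfying the medial law. -/
structure MedialQuandleStr (Q : Type*) where
  op : Q → Q → Q
  idem : ∀ x, op x x = x
  bij : ∀ y, Function.Bijective fun x => op x y
  medial : ∀ w x y z, op (op w x) (op y z) = op (op w y) (op x z)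

/-- A quandle structure on a type `T`. -/
structure QuandleStr (T : Type*) where
  op : T → T → T
  idem : ∀ x, op x x = x
  bij : ∀ y, Function.Bijective fun x => op x y
  distrib : ∀ x y z, op (op x y) z = op (op x z) (op y z)

namespace MedialQuandleStr

variable {Q : Type*} (s : MedialQuandleStr Q)

/-- The translation `β_y : x ↦ x ▷ y`, as a permutation of `Q`. -/
def β (y : Q) : Equiv.Perm Q := Equiv.ofBijective _ (s.bij y)

/-- `β(Q)`: the subgroup of permutations generated by the translations. -/
def transGroup : Subgroup (Equiv.Perm Q) := Subgroup.closure (Set.range s.β)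

/-- The displacement group `Dis(Q)`, generated by the elementary displacements
`β_y β_z⁻¹`. -/
def Dis : Subgroup (Equiv.Perm Q) :=
  Subgroup.closure {d : Equiv.Perm Q | ∃ y z, d = s.β y * (s.β z)⁻¹}

/-- The orbit of `q`: the smallest subset of `Q` containing `q` and closed under the
action of `β(Q)`. -/
def orbit (q : Q) : Set Q := {x | ∃ g ∈ s.transGroup, g q = x}

end MedialQuandleStr

section Construction

variable {M : Type*} [AddCommGroup M] [Module Λ M] {I : Type*}

/-- The carrier of the quandle `Q(N,(m_i),(X_i))`: the disjoint union of the quotients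
`Q_i = N/X_i`. -/
def QCar (N : Submodule Λ M) (X : I → Submodule Λ ↥N) : Type _ :=
  Σ i : I, ↥N ⧸ X i

/-- The condition `(1-t)·X_i = 0` for all `i`. -/
def annCond (N : Submodule Λ M) (X : I → Submodule Λ ↥N) : Prop :=
  ∀ i, ∀ x ∈ X i, (1 - tL) • (x : ↥N) = 0

/-- Multiplication by `1-t`, descended from `N/X_j` to `N` (well defined since
`(1-t)·X_j = 0`). -/
def oneSubT (N : Submodule Λ M) {X : I → Submodule Λ ↥N} (h : annCond N X) (j : I) :
    (↥N ⧸ X j) →ₗ[Λ] ↥N :=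
  Submodule.liftQ (X j) ((1 - tL) • (LinearMap.id : ↥N →ₗ[Λ] ↥N))
    (fun x hx => by simpa using h j x hx)

/-- The operation of `Q(N,(m_i),(X_i))`: for `x ∈ Q_i` and `y ∈ Q_j`,
`x ▷ y = m_j - m_i + t·x + (1-t)·y + X_i ∈ Q_i`. -/
def qop (N : Submodule Λ M) (m : I → M) {X : I → Submodule Λ ↥N}
    (hm : ∀ i j, m i - m j ∈ N) (h : annCond N X) :
    QCar N X → QCar N X → QCar N X :=
  fun x y =>
    ⟨x.1, Submodule.Quotient.mk (⟨m y.1 - m x.1, hm y.1 x.1⟩ : ↥N)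
        + tL • x.2 + Submodule.Quotient.mk (oneSubT N h y.1 y.2)⟩

end Construction

/-! Lifting elements of the summands `Q_i = N/X_i` to representatives in `N`, the operation
becomes the affine expression `m_j - m_i + t a + (1 - t) b`; idempotence and mediality are then
identities of `Λ`-linear combinations, and right translations are bijective because `t` is a unit
of `Λ`. -/

section Construction

variable {M : Type*} [AddCommGroup M] [Module Λ M] {I : Type*}
  {N : Submodule Λ M} {m : I → M} {X : I → Submodule Λ ↥N}
  (hm : ∀ i j, m i - m j ∈ N) (h : annCond N X)

lemma qop_mk (i j : I) (a b : ↥N) :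
    qop N m hm h ⟨i, Submodule.Quotient.mk a⟩ ⟨j, Submodule.Quotient.mk b⟩ =
      ⟨i, Submodule.Quotient.mk (⟨m j - m i, hm j i⟩ + tL • a + (1 - tL) • b)⟩ := by
  simp only [qop, oneSubT, Submodule.liftQ_apply, LinearMap.smul_apply, LinearMap.id_coe, id_eq,
    ← Submodule.Quotient.mk_smul, ← Submodule.Quotient.mk_add]
  rfl

lemma qop_self (x : QCar N X) : qop N m hm h x x = x := by
  obtain ⟨i, a⟩ := x
  obtain ⟨a, rfl⟩ := Submodule.Quotient.mk_surjective _ a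
  rw [qop_mk]
  congr
  ext
  simp only [sub_self, Submodule.coe_add, Submodule.coe_smul]
  module

lemma qop_left_bijective (y : QCar N X) : Function.Bijective fun x => qop N m hm h x y := by
  let translate (i : I) (a : ↥N ⧸ X i) : ↥N ⧸ X i :=
    Submodule.Quotient.mk ⟨m y.1 - m i, hm y.1 i⟩ + tL • a +
      Submodule.Quotient.mk (oneSubT N h y.1 y.2)
  have htranslate : ∀ i, Function.Bijective (translate i) := fun i =>
    (Equiv.addRight _).bijective.comp
      ((Equiv.addLeft (Submodule.Quotient.mk (p := X i) ⟨m y.1 - m i, hm y.1 i⟩)).bijective.comp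
        (isUnit_T 1).smul_bijective)
  change Function.Bijective (Sigma.map (β₂ := fun i => ↥N ⧸ X i) id translate)
  exact ⟨Function.injective_id.sigma_map fun i => (htranslate i).1,
    Function.surjective_id.sigma_map fun i => (htranslate i).2⟩

lemma qop_medial (w x y z : QCar N X) :
    qop N m hm h (qop N m hm h w x) (qop N m hm h y z) =
      qop N m hm h (qop N m hm h w y) (qop N m hm h x z) := by
  obtain ⟨i, a⟩ := w
  obtain ⟨j, b⟩ := x
  obtain ⟨k, c⟩ := y
  obtain ⟨l, d⟩ := z
  obtain ⟨a, rfl⟩ := Submodule.Quotient.mk_surjective _ a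
  obtain ⟨b, rfl⟩ := Submodule.Quotient.mk_surjective _ b
  obtain ⟨c, rfl⟩ := Submodule.Quotient.mk_surjective _ c
  obtain ⟨d, rfl⟩ := Submodule.Quotient.mk_surjective _ d
  simp only [qop_mk]
  congr 2
  ext
  simp only [Submodule.coe_add, Submodule.coe_smul]
  module

end Construction

theorem stmt0_general {M : Type*} [AddCommGroup M] [Module Λ M] {I : Type*}
    (N : Submodule Λ M) (m : I → M) (X : I → Submodule Λ ↥N)
    (hm : ∀ i j, m i - m j ∈ N) (h : annCond N X) :
    (∀ x : QCar N X, qop N m hm h x x = x) ∧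
    (∀ y : QCar N X, Function.Bijective fun x => qop N m hm h x y) ∧
    (∀ w x y z : QCar N X,
      qop N m hm h (qop N m hm h w x) (qop N m hm h y z) =
        qop N m hm h (qop N m hm h w y) (qop N m hm h x z)) :=
  ⟨qop_self hm h, qop_left_bijective hm h, qop_medial hm h⟩

/-- The structure `Q(N,(m_i),(X_i))` of the construction is a medial
quandle: the operation `qop` is idempotent, its right translations are bijections, and it
satisfies the medial law. -/
theorem stmt0 {M : Type*} [AddCommGroup M] [Module Λ M] {I : Type*} [Nonempty I]
    (N : Submodule Λ M) (m : I → M) (X : I → Submodule Λ ↥N)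
    (hm : ∀ i j, m i - m j ∈ N) (h : annCond N X) :
    (∀ x : QCar N X, qop N m hm h x x = x) ∧
    (∀ y : QCar N X, Function.Bijective fun x => qop N m hm h x y) ∧
    (∀ w x y z : QCar N X,
      qop N m hm h (qop N m hm h w x) (qop N m hm h y z) =
        qop N m hm h (qop N m hm h w y) (qop N m hm h x z)) :=
  stmt0_general N m X hm h
end
end

section
/- Let Q be a medial quandle, let d ∈ Dis(Q), and let q*, q** ∈ Q be arbitrary. Then β_{q*} d β_{q*}⁻¹ = β_{q**} d β_{q**}⁻¹; that is, conjugation of a displacement by a translation does not depend on the choice of translation. -/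
open LaurentPolynomial

set_option synthInstance.maxHeartbeats 1000000
set_option maxHeartbeats 1000000

noncomputable section

/- The medial law in operator form reads `β_{y▷z} = β_{x▷z} β_y β_x⁻¹` for every `x`.
For `x = z` (idempotency) this is `β_{y▷z} = β_z β_y β_z⁻¹`, so `β_q` conjugates `β_y β_z⁻¹` to
`β_{y▷q} β_{z▷q}⁻¹`; for arbitrary `x` the same law rewrites this as the conjugate of `β_y β_z⁻¹`
by `β_{x▷q}`, and every `c` is some `x ▷ q`. Hence `β_{q₂}⁻¹ β_{q₁}` centralizes the generators
of `Dis(Q)`, and so all of `Dis(Q)`. -/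

theorem conj_eq_conj_iff_mem_centralizer {G : Type*} [Group G] (a b g : G) :
    a * g * a⁻¹ = b * g * b⁻¹ ↔ g ∈ Subgroup.centralizer {b⁻¹ * a} := by
  rw [Subgroup.mem_centralizer_singleton_iff]
  constructor <;> intro h
  · calc g * (b⁻¹ * a) = b⁻¹ * (b * g * b⁻¹) * a := by group
      _ = b⁻¹ * (a * g * a⁻¹) * a := by rw [h]
      _ = b⁻¹ * a * g := by group
  · calc a * g * a⁻¹ = b * (b⁻¹ * a * g) * a⁻¹ := by group
      _ = b * (g * (b⁻¹ * a)) * a⁻¹ := by rw [h]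
      _ = b * g * b⁻¹ := by group

namespace MedialQuandleStr

variable {Q : Type*} (s : MedialQuandleStr Q)

theorem β_op (x y z : Q) : s.β (s.op y z) = s.β (s.op x z) * s.β y * (s.β x)⁻¹ := by
  rw [eq_mul_inv_iff_mul_eq]
  ext w
  exact s.medial w x y z

theorem conj_β_mul_inv (q y z : Q) :
    s.β q * (s.β y * (s.β z)⁻¹) * (s.β q)⁻¹ = s.β (s.op y q) * (s.β (s.op z q))⁻¹ := by
  rw [s.β_op q y q, s.β_op q z q, s.idem]
  group

theorem conj_β_mul_inv_eq_conj (q c y z : Q) :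
    s.β q * (s.β y * (s.β z)⁻¹) * (s.β q)⁻¹ = s.β c * (s.β y * (s.β z)⁻¹) * (s.β c)⁻¹ := by
  obtain ⟨x, rfl⟩ := (s.bij q).surjective c
  rw [s.conj_β_mul_inv, s.β_op x y q, s.β_op x z q]
  group

theorem Dis_le_centralizer (a b : Q) : s.Dis ≤ Subgroup.centralizer {(s.β b)⁻¹ * s.β a} := by
  refine Subgroup.closure_le _ |>.2 ?_
  rintro _ ⟨y, z, rfl⟩
  exact (conj_eq_conj_iff_mem_centralizer _ _ _).1 (s.conj_β_mul_inv_eq_conj a b y z)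

end MedialQuandleStr

/-- In a medial quandle, conjugation of a displacement by a translation
does not depend on the choice of the translation:
`β_{q₁} d β_{q₁}⁻¹ = β_{q₂} d β_{q₂}⁻¹` for every `d ∈ Dis(Q)`. -/
theorem stmt2 {Q : Type*} (s : MedialQuandleStr Q) (d : Equiv.Perm Q)
    (hd : d ∈ s.Dis) (q₁ q₂ : Q) :
    s.β q₁ * d * (s.β q₁)⁻¹ = s.β q₂ * d * (s.β q₂)⁻¹ :=
  (conj_eq_conj_iff_mem_centralizer _ _ _).2 (s.Dis_le_centralizer q₁ q₂ hd)
end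
end

section
/- Let Q be a medial quandle and let d ∈ Dis(Q) have a fixed point, say d(q₀) = q₀ for some q₀ ∈ Q. Then d commutes with β_{q₀}, and consequently β_q d β_q⁻¹ = d for every q ∈ Q (that is, d = t·d in the Λ-module Dis(Q)). -/
open LaurentPolynomial

set_option synthInstance.maxHeartbeats 1000000
set_option maxHeartbeats 1000000

noncomputable section

/-! Elements of `Dis(Q)` are automorphisms, so `d β_y d⁻¹ = β_{d y}`; at the fixed point `q₀` this
says that `d` commutes with `β_{q₀}`. The medial law makes `Dis(Q)` abelian, and writing
`β_q = (β_q β_{q₀}⁻¹) β_{q₀}` with `β_q β_{q₀}⁻¹ ∈ Dis(Q)` shows that `d` commutes with every `β_q`. -/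

namespace MedialQuandleStr

variable {Q : Type*} (s : MedialQuandleStr Q)

lemma β_apply (y x : Q) : s.β y x = s.op x y := rfl

def autGroup : Subgroup (Equiv.Perm Q) where
  carrier := {g | ∀ x y, g (s.op x y) = s.op (g x) (g y)}
  one_mem' _ _ := rfl
  mul_mem' {g h} hg hh x y := by
    rw [Equiv.Perm.mul_apply, hh, hg]
    rfl
  inv_mem' {g} hg x y := g.injective <| by
    rw [hg]
    simp only [Equiv.Perm.coe_inv, Equiv.apply_symm_apply]

variable {s} in
lemma mul_β_of_mem_autGroup {g : Equiv.Perm Q} (hg : g ∈ s.autGroup) (y : Q) :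
    g * s.β y = s.β (g y) * g :=
  Equiv.ext fun x => hg x y

lemma β_mem_autGroup (y : Q) : s.β y ∈ s.autGroup := fun x z => by
  simpa only [β_apply, s.idem] using s.medial x z y y

lemma dis_le_autGroup : s.Dis ≤ s.autGroup := by
  rw [Dis, Subgroup.closure_le]
  rintro g ⟨y, z, rfl⟩
  exact mul_mem (s.β_mem_autGroup y) (inv_mem (s.β_mem_autGroup z))

lemma β_op_mul_β (x y z : Q) : s.β (s.op y z) * s.β x = s.β (s.op x z) * s.β y :=
  Equiv.ext fun w => s.medial w x y z

lemma β_mul_inv_β_mul_β_comm (x y z : Q) :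
    s.β y * (s.β z)⁻¹ * s.β x = s.β x * (s.β z)⁻¹ * s.β y := by
  have hconj (u : Q) : s.β (s.op u z) = s.β z * s.β u * (s.β z)⁻¹ := by
    rw [s.mul_β_of_mem_autGroup (s.β_mem_autGroup z) u, mul_inv_cancel_right, β_apply]
  have h := s.β_op_mul_β x y z
  rw [hconj, hconj] at h
  exact mul_left_cancel (a := s.β z) (by simpa only [mul_assoc] using h)

lemma β_mul_inv_β_commute (a b c e : Q) :
    Commute (s.β a * (s.β b)⁻¹) (s.β c * (s.β e)⁻¹) :=
  calc s.β a * (s.β b)⁻¹ * (s.β c * (s.β e)⁻¹)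
      = (s.β a * (s.β b)⁻¹ * s.β c) * (s.β e)⁻¹ := by group
    _ = s.β c * ((s.β e)⁻¹ * (s.β e * (s.β b)⁻¹ * s.β a) * (s.β e)⁻¹) := by
        rw [s.β_mul_inv_β_mul_β_comm]; group
    _ = s.β c * (s.β e)⁻¹ * (s.β a * (s.β b)⁻¹) := by
        rw [s.β_mul_inv_β_mul_β_comm a e b]; group

instance isMulCommutative_dis : IsMulCommutative s.Dis :=
  Subgroup.isMulCommutative_closure <| by
    rintro _ ⟨a, b, rfl⟩ _ ⟨c, e, rfl⟩
    exact s.β_mul_inv_β_commute a b c e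

end MedialQuandleStr

/-- If a displacement `d` of a medial quandle has a fixed point `q₀`,
then `d` commutes with `β_{q₀}`, and consequently `β_q d β_q⁻¹ = d` for every `q`
(that is, `d = t·d` in the `Λ`-module `Dis(Q)`). -/
theorem stmt4 {Q : Type*} (s : MedialQuandleStr Q) (d : Equiv.Perm Q)
    (hd : d ∈ s.Dis) (q₀ : Q) (hfix : d q₀ = q₀) :
    d * s.β q₀ = s.β q₀ * d ∧ ∀ q : Q, s.β q * d * (s.β q)⁻¹ = d := by
  have hcomm : d * s.β q₀ = s.β q₀ * d := by
    simpa only [hfix] using MedialQuandleStr.mul_β_of_mem_autGroup (s.dis_le_autGroup hd) q₀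
  refine ⟨hcomm, fun q => ?_⟩
  have hdisp : s.β q * (s.β q₀)⁻¹ ∈ s.Dis := Subgroup.subset_closure ⟨q, q₀, rfl⟩
  calc s.β q * d * (s.β q)⁻¹ = (s.β q * (s.β q₀)⁻¹) * (d * s.β q₀) * (s.β q)⁻¹ := by
        rw [hcomm]; group
    _ = d * (s.β q * (s.β q₀)⁻¹) * s.β q₀ * (s.β q)⁻¹ := by
        rw [← mul_assoc, setLike_mul_comm hdisp hd]
    _ = d := by group
end
end

section
/- Let f: Q₁ → Q₂ be a surjective quandle homomorphism between medial quandles. Then there is a surjective group homomorphism Dis(f): Dis(Q₁) → Dis(Q₂) such that Dis(f)(β_y β_z⁻¹) = β_{f(y)} β_{f(z)}⁻¹ for all y, z ∈ Q₁, and Dis(f)(d) ∘ f = f ∘ d for every d ∈ Dis(Q₁). -/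
open LaurentPolynomial

set_option synthInstance.maxHeartbeats 1000000
set_option maxHeartbeats 1000000

noncomputable section

/-!
A quandle homomorphism intertwines translations, `f ∘ β_y = β_{f y} ∘ f`, hence it intertwines
every displacement of `Q₁` with some permutation of `Q₂`, which is unique because `f` is
surjective. Uniqueness makes `d ↦ Dis(f)(d)` a homomorphism, and since every elementary
displacement of `Q₂` is the image of one of `Q₁`, its image is all of `Dis(Q₂)`.
-/

open Function Equiv

section Descend

variable {α β : Type*} {f : α → β}

theorem Function.Semiconj.eq_of_surjective {ga : α → α} {gb gb' : β → β} (hf : Surjective f)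
    (h : Semiconj f ga gb) (h' : Semiconj f ga gb') : gb = gb' :=
  funext <| hf.forall.2 fun x => (h x).symm.trans (h' x)

theorem Function.Semiconj.perm_eq_of_surjective (hf : Surjective f) {g : Perm α} {h h' : Perm β}
    (e : Semiconj f g h) (e' : Semiconj f g h') : h = h' :=
  DFunLike.coe_injective (e.eq_of_surjective hf e')

theorem Function.Semiconj.perm_inv {g : Perm α} {h : Perm β} (e : Semiconj f g h) :
    Semiconj f ⇑g⁻¹ ⇑h⁻¹ :=
  e.inverses_right g.apply_symm_apply h.symm_apply_apply

def descendingPerms (f : α → β) : Subgroup (Perm α) where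
  carrier := {g | ∃ h : Perm β, Semiconj f g h}
  one_mem' := ⟨1, Semiconj.id_right⟩
  mul_mem' := fun ⟨h₁, e₁⟩ ⟨h₂, e₂⟩ => ⟨h₁ * h₂, e₁.comp_right e₂⟩
  inv_mem' := fun ⟨h, e⟩ => ⟨h⁻¹, e.perm_inv⟩

noncomputable def descendHom (hf : Surjective f) : descendingPerms f →* Perm β where
  toFun g := g.2.choose
  map_one' := (Subtype.prop (1 : descendingPerms f)).choose_spec.perm_eq_of_surjective hf
    Semiconj.id_right
  map_mul' g₁ g₂ := (g₁ * g₂).2.choose_spec.perm_eq_of_surjective hf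
    (g₁.2.choose_spec.comp_right g₂.2.choose_spec)

theorem semiconj_descendHom (hf : Surjective f) (g : descendingPerms f) :
    Semiconj f g (descendHom hf g) :=
  g.2.choose_spec

theorem descendHom_eq (hf : Surjective f) {g : descendingPerms f} {h : Perm β}
    (e : Semiconj f g h) : descendHom hf g = h :=
  (semiconj_descendHom hf g).perm_eq_of_surjective hf e

theorem range_descendHom_comp_inclusion (hf : Surjective f) {S : Set (Perm α)}
    (hS : Subgroup.closure S ≤ descendingPerms f) :
    ((descendHom hf).comp (Subgroup.inclusion hS)).range =
      Subgroup.closure {h : Perm β | ∃ g ∈ S, Semiconj f g h} := by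
  rw [MonoidHom.range_eq_map, ← Subgroup.closure_closure_coe_preimage, MonoidHom.map_closure]
  refine congrArg Subgroup.closure (Set.ext fun h => ⟨?_, ?_⟩)
  · rintro ⟨g, hgS, rfl⟩
    exact ⟨g, hgS, semiconj_descendHom hf (Subgroup.inclusion hS g)⟩
  · rintro ⟨g, hgS, e⟩
    exact ⟨⟨g, Subgroup.subset_closure hgS⟩, hgS, descendHom_eq hf e⟩

end Descend

namespace MedialQuandleStr

variable {Q₁ Q₂ : Type*} {s₁ : MedialQuandleStr Q₁} {s₂ : MedialQuandleStr Q₂} {f : Q₁ → Q₂}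

theorem semiconj_β (hhom : ∀ x y, f (s₁.op x y) = s₂.op (f x) (f y)) (y : Q₁) :
    Semiconj f (s₁.β y) (s₂.β (f y)) :=
  fun x => hhom x y

theorem semiconj_β_mul_β_inv (hhom : ∀ x y, f (s₁.op x y) = s₂.op (f x) (f y)) (y z : Q₁) :
    Semiconj f (s₁.β y * (s₁.β z)⁻¹) (s₂.β (f y) * (s₂.β (f z))⁻¹) :=
  (semiconj_β hhom y).comp_right (semiconj_β hhom z).perm_inv

theorem Dis_le_descendingPerms (hhom : ∀ x y, f (s₁.op x y) = s₂.op (f x) (f y)) :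
    s₁.Dis ≤ descendingPerms f :=
  Subgroup.closure_le _ |>.2 fun _ ⟨y, z, hd⟩ => ⟨_, hd ▸ semiconj_β_mul_β_inv hhom y z⟩

theorem closure_semiconj_displacements (hf : Surjective f)
    (hhom : ∀ x y, f (s₁.op x y) = s₂.op (f x) (f y)) :
    Subgroup.closure {h : Perm Q₂ | ∃ g ∈ {d | ∃ y z, d = s₁.β y * (s₁.β z)⁻¹}, Semiconj f g h} =
      s₂.Dis := by
  refine congrArg Subgroup.closure (Set.ext fun h => ⟨?_, ?_⟩)
  · rintro ⟨_, ⟨y, z, rfl⟩, e⟩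
    exact ⟨f y, f z, e.perm_eq_of_surjective hf (semiconj_β_mul_β_inv hhom y z)⟩
  · rintro ⟨y', z', rfl⟩
    obtain ⟨y, rfl⟩ := hf y'
    obtain ⟨z, rfl⟩ := hf z'
    exact ⟨_, ⟨y, z, rfl⟩, semiconj_β_mul_β_inv hhom y z⟩

end MedialQuandleStr

/-- A surjective quandle homomorphism `f : Q₁ → Q₂` of medial quandles
induces a surjective group homomorphism `Dis(f) : Dis(Q₁) → Dis(Q₂)` with
`Dis(f)(β_y β_z⁻¹) = β_{f y} β_{f z}⁻¹` for all `y, z ∈ Q₁`, and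
`Dis(f)(d) ∘ f = f ∘ d` for every `d ∈ Dis(Q₁)`. -/
theorem stmt7 {Q₁ Q₂ : Type*} (s₁ : MedialQuandleStr Q₁) (s₂ : MedialQuandleStr Q₂)
    (f : Q₁ → Q₂) (hf : Function.Surjective f)
    (hhom : ∀ x y, f (s₁.op x y) = s₂.op (f x) (f y)) :
    ∃ φ : ↥s₁.Dis →* ↥s₂.Dis,
      Function.Surjective φ ∧
      (∀ y z : Q₁,
        (φ ⟨s₁.β y * (s₁.β z)⁻¹, by exact Subgroup.subset_closure ⟨y, z, rfl⟩⟩).val =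
          s₂.β (f y) * (s₂.β (f z))⁻¹) ∧
      (∀ d : ↥s₁.Dis, ∀ x : Q₁, (φ d).val (f x) = f (d.val x)) := by
  let ψ := (descendHom hf).comp (Subgroup.inclusion (MedialQuandleStr.Dis_le_descendingPerms hhom))
  have hrange : ψ.range = s₂.Dis := (range_descendHom_comp_inclusion hf _).trans
    (MedialQuandleStr.closure_semiconj_displacements hf hhom)
  refine ⟨ψ.codRestrict s₂.Dis fun d => hrange ▸ ⟨d, rfl⟩, ?_, fun y z => ?_,
    fun d x => ?_⟩
  · rintro ⟨h, hh⟩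
    obtain ⟨d, rfl⟩ := (hrange ▸ hh : h ∈ ψ.range)
    exact ⟨d, rfl⟩
  · exact descendHom_eq hf (MedialQuandleStr.semiconj_β_mul_β_inv hhom y z)
  · exact (semiconj_descendHom hf _ x).symm
end
end

section
/- Let Q and Q′ be medial quandles and f: Q → Q′ a quandle homomorphism. Then f is an isomorphism if and only if the following three properties hold: (1) f is surjective; (2) whenever x, y ∈ Q lie in different orbits of Q, the images f(x), f(y) lie in different orbits of Q′; (3) whenever x ∈ Q, d ∈ Dis(Q), and Dis(f)(d)(f(x)) = f(x), it is also true that d(x) = x, where Dis(f): Dis(Q) → Dis(Q′) is the homomorphism induced by the surjection f (determined by Dis(f)(β_y β_z⁻¹) = β_{f(y)} β_{f(z)}⁻¹). -/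
open LaurentPolynomial

set_option synthInstance.maxHeartbeats 1000000
set_option maxHeartbeats 1000000

noncomputable section

namespace MedialQuandleStrAux

open MedialQuandleStr

variable {Q : Type*} (s : MedialQuandleStr Q)

lemma β_apply (y x : Q) : s.β y x = s.op x y := rfl

lemma β_mem (y : Q) : s.β y ∈ s.transGroup :=
  Subgroup.subset_closure ⟨y, rfl⟩

lemma rdistrib (x y z : Q) : s.op (s.op x y) z = s.op (s.op x z) (s.op y z) := by
  have := s.medial x y z z
  rwa [s.idem z] at this

lemma β_mul (x y : Q) : s.β x * s.β y = s.β (s.op y x) * s.β x := by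
  ext z
  simp only [Equiv.Perm.mul_apply, β_apply]
  exact rdistrib s z y x

lemma conj_β (x y : Q) : s.β x * s.β y * (s.β x)⁻¹ = s.β (s.op y x) := by
  rw [β_mul, mul_inv_cancel_right]

lemma conj_β_inv (x y : Q) :
    (s.β x)⁻¹ * s.β y * s.β x = s.β ((s.β x).symm y) := by
  have h : s.β y = s.β x * s.β ((s.β x).symm y) * (s.β x)⁻¹ := by
    rw [conj_β]
    congr 1
    rw [← β_apply]
    exact ((s.β x).apply_symm_apply y).symm
  rw [h]; group

/-- Conjugation by elements of `β(Q)` preserves `Dis(Q)`. -/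
lemma conj_dis : ∀ g ∈ s.transGroup, ∀ d ∈ s.Dis, g * d * g⁻¹ ∈ s.Dis := by
  -- first: if conjugation by `g` sends generators into Dis, it sends all of Dis into Dis
  have key : ∀ g : Equiv.Perm Q,
      (∀ u v : Q, g * (s.β u * (s.β v)⁻¹) * g⁻¹ ∈ s.Dis) →
      ∀ d ∈ s.Dis, g * d * g⁻¹ ∈ s.Dis := by
    intro g hg d hd
    induction hd using Subgroup.closure_induction with
    | mem x hx => obtain ⟨u, v, rfl⟩ := hx; exact hg u v
    | one => simpa using one_mem s.Dis
    | mul x y hx hy ihx ihy =>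
        have : g * (x * y) * g⁻¹ = (g * x * g⁻¹) * (g * y * g⁻¹) := by group
        rw [this]; exact mul_mem ihx ihy
    | inv x hx ihx =>
        have : g * x⁻¹ * g⁻¹ = (g * x * g⁻¹)⁻¹ := by group
        rw [this]; exact inv_mem ihx
  intro g hg
  -- prove the two-sided statement by closure induction on `g`
  have main : (∀ d ∈ s.Dis, g * d * g⁻¹ ∈ s.Dis) ∧
      (∀ d ∈ s.Dis, g⁻¹ * d * g ∈ s.Dis) := by
    induction hg using Subgroup.closure_induction with
    | mem x hx =>
        obtain ⟨y, rfl⟩ := hx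
        constructor
        · apply key
          intro u v
          have : s.β y * (s.β u * (s.β v)⁻¹) * (s.β y)⁻¹ =
              (s.β y * s.β u * (s.β y)⁻¹) * (s.β y * s.β v * (s.β y)⁻¹)⁻¹ := by group
          rw [this, conj_β, conj_β]
          exact Subgroup.subset_closure ⟨s.op u y, s.op v y, rfl⟩
        · apply key
          intro u v
          have : (s.β y)⁻¹ * (s.β u * (s.β v)⁻¹) * ((s.β y)⁻¹)⁻¹ =
              ((s.β y)⁻¹ * s.β u * s.β y) * ((s.β y)⁻¹ * s.β v * s.β y)⁻¹ := by group
          rw [this, conj_β_inv, conj_β_inv]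
          exact Subgroup.subset_closure ⟨(s.β y).symm u, (s.β y).symm v, rfl⟩
    | one => constructor <;> · intro d hd; simpa using hd
    | mul x y hx hy ihx ihy =>
        constructor
        · intro d hd
          have : (x * y) * d * (x * y)⁻¹ = x * (y * d * y⁻¹) * x⁻¹ := by group
          rw [this]; exact ihx.1 _ (ihy.1 d hd)
        · intro d hd
          have : (x * y)⁻¹ * d * (x * y) = y⁻¹ * (x⁻¹ * d * x) * y := by group
          rw [this]; exact ihy.2 _ (ihx.2 d hd)
    | inv x hx ihx =>
        refine ⟨ihx.2, ?_⟩
        intro d hd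
        have : x⁻¹⁻¹ * d * x⁻¹ = x * d * x⁻¹ := by group
        rw [this]; exact ihx.1 d hd
  exact main.1

/-- Every element of `β(Q)` decomposes as `d * (β a)^k` with `d ∈ Dis(Q)`. -/
lemma decomp (a : Q) : ∀ g ∈ s.transGroup, ∃ d ∈ s.Dis, ∃ k : ℤ, g = d * (s.β a) ^ k := by
  intro g hg
  induction hg using Subgroup.closure_induction with
  | mem x hx =>
      obtain ⟨y, rfl⟩ := hx
      refine ⟨s.β y * (s.β a)⁻¹, Subgroup.subset_closure ⟨y, a, rfl⟩, 1, ?_⟩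
      group
  | one => exact ⟨1, one_mem _, 0, by group⟩
  | mul x y hx hy ihx ihy =>
      obtain ⟨d₁, hd₁, k₁, rfl⟩ := ihx
      obtain ⟨d₂, hd₂, k₂, rfl⟩ := ihy
      refine ⟨d₁ * ((s.β a) ^ k₁ * d₂ * ((s.β a) ^ k₁)⁻¹), ?_, k₁ + k₂, by group⟩
      exact mul_mem hd₁
        (conj_dis s _ (zpow_mem (β_mem s a) k₁) d₂ hd₂)
  | inv x hx ihx =>
      obtain ⟨d, hd, k, rfl⟩ := ihx
      refine ⟨((s.β a) ^ k)⁻¹ * d⁻¹ * (((s.β a) ^ k)⁻¹)⁻¹, ?_, -k, by group⟩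
      exact conj_dis s _ (inv_mem (zpow_mem (β_mem s a) k)) d⁻¹ (inv_mem hd)

lemma fix_zpow (a : Q) (k : ℤ) : ((s.β a) ^ k) a = a := by
  have h : Function.IsFixedPt (s.β a) a := s.idem a
  exact h.perm_zpow k

lemma mem_orbit_self (q : Q) : q ∈ s.orbit q := ⟨1, one_mem _, rfl⟩

lemma orbit_apply {g : Equiv.Perm Q} (hg : g ∈ s.transGroup) (x : Q) :
    s.orbit (g x) = s.orbit x := by
  ext z
  constructor
  · rintro ⟨h, hh, rfl⟩
    exact ⟨h * g, mul_mem hh hg, rfl⟩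
  · rintro ⟨h, hh, rfl⟩
    exact ⟨h * g⁻¹, mul_mem hh (inv_mem hg), by simp [Equiv.Perm.mul_apply]⟩

/-- Pullback of transGroup elements along a surjective homomorphism. -/
lemma pull {Q' : Type*} (s' : MedialQuandleStr Q') (f : Q → Q')
    (hhom : ∀ x y, f (s.op x y) = s'.op (f x) (f y)) (hsurj : Function.Surjective f) :
    ∀ g' ∈ s'.transGroup, ∃ g ∈ s.transGroup, ∀ x, f (g x) = g' (f x) := by
  intro g' hg'
  induction hg' using Subgroup.closure_induction with
  | mem x hx =>
      obtain ⟨y', rfl⟩ := hx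
      obtain ⟨u, rfl⟩ := hsurj y'
      exact ⟨s.β u, β_mem s u, fun x => hhom x u⟩
  | one => exact ⟨1, one_mem _, fun x => rfl⟩
  | mul x y hx hy ihx ihy =>
      obtain ⟨g₁, hg₁, hc₁⟩ := ihx
      obtain ⟨g₂, hg₂, hc₂⟩ := ihy
      refine ⟨g₁ * g₂, mul_mem hg₁ hg₂, fun z => ?_⟩
      simp only [Equiv.Perm.mul_apply, hc₁, hc₂]
  | inv x hx ihx =>
      obtain ⟨g, hg, hc⟩ := ihx
      refine ⟨g⁻¹, inv_mem hg, fun z => ?_⟩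
      apply x.injective
      rw [← Equiv.Perm.mul_apply x x⁻¹, mul_inv_cancel, Equiv.Perm.one_apply,
        ← hc (g⁻¹ z)]
      congr 1
      simp

end MedialQuandleStrAux

open MedialQuandleStrAux in
/-- A quandle homomorphism `f : Q → Q'` of medial quandles is an
isomorphism (i.e. bijective) if and only if: (1) `f` is surjective; (2) points in
different orbits of `Q` are sent to points in different orbits of `Q'`; and (3) whenever
`x ∈ Q`, `d ∈ Dis(Q)` and `Dis(f)(d)(f x) = f x` — equivalently, `f (d x) = f x`,
since the induced homomorphism satisfies `Dis(f)(d) ∘ f = f ∘ d` — it is also true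
that `d x = x`. -/
theorem stmt8 {Q Q' : Type*} (s : MedialQuandleStr Q) (s' : MedialQuandleStr Q')
    (f : Q → Q') (hhom : ∀ x y, f (s.op x y) = s'.op (f x) (f y)) :
    Function.Bijective f ↔
      (Function.Surjective f ∧
       (∀ x y : Q, s.orbit x ≠ s.orbit y → s'.orbit (f x) ≠ s'.orbit (f y)) ∧
       (∀ x : Q, ∀ d ∈ s.Dis, f (d x) = f x → d x = x)) := by
  constructor
  · intro hf
    refine ⟨hf.surjective, ?_, ?_⟩
    · intro x y hxy hcon
      apply hxy
      have hmem : f y ∈ s'.orbit (f x) := hcon ▸ mem_orbit_self s' (f y)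
      obtain ⟨g', hg', hgx⟩ := hmem
      obtain ⟨g, hg, hcomm⟩ := pull s s' f hhom hf.surjective g' hg'
      have hgxy : g x = y := hf.injective (by rw [hcomm, hgx])
      rw [← hgxy]
      exact (orbit_apply s hg x).symm
    · intro x d _ hfd
      exact hf.injective hfd
  · rintro ⟨hsurj, horb, hfix⟩
    refine ⟨?_, hsurj⟩
    intro a b hab
    have h1 : s.orbit a = s.orbit b := by
      by_contra hne
      exact horb a b hne (by rw [hab])
    have hmem : b ∈ s.orbit a := h1 ▸ mem_orbit_self s b
    obtain ⟨g, hg, hga⟩ := hmem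
    obtain ⟨d, hd, k, rfl⟩ := decomp s a g hg
    have hda : d a = b := by
      rw [← hga, Equiv.Perm.mul_apply, fix_zpow]
    have hfda : f (d a) = f a := by rw [hda, ← hab]
    have hdaa := hfix a d hd hfda
    rw [← hda, hdaa]
end
end

section
/- Let Q = Q(N,(m_i),(X_i)) be the quandle of the construction. If d is a displacement of Q (an element of Dis(Q)), then there exists an element n ∈ N such that d(x) = x + n + X_i for every i ∈ I and every x ∈ Q_i. -/
/-!
Each translation `β_y` acts on `Q_i` as `x ↦ t·x + c(y, i)` with `c(y, i) = m_{y.1} - m_i + (1-t)·y`.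
The linear part is the same for all `y` and `c(y, i) - c(z, i) = m_{y.1} - m_{z.1} + (1-t)·y - (1-t)·z`
does not depend on `i`, so `β_y β_z⁻¹` translates every `Q_i` by one and the same element of `N`.
Translations by elements of `N` form a subgroup of `Aut(Q)`, which therefore contains `Dis(Q)`.
-/

open LaurentPolynomial

set_option synthInstance.maxHeartbeats 1000000
set_option maxHeartbeats 1000000

noncomputable section

namespace QCar

variable {M : Type*} [AddCommGroup M] [Module Λ M] {I : Type*}
  {N : Submodule Λ M} {X : I → Submodule Λ ↥N}

def translate (n : ↥N) : Equiv.Perm (QCar N X) :=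
  Equiv.sigmaCongrRight fun _ => Equiv.addRight (Submodule.Quotient.mk n)

def translateHom : Multiplicative ↥N →* Equiv.Perm (QCar N X) where
  toFun n := translate n.toAdd
  map_one' := Equiv.ext fun p => by
    obtain ⟨i, x⟩ := p
    exact congrArg (Sigma.mk i) (show x + Submodule.Quotient.mk 0 = x by simp)
  map_mul' a b := Equiv.ext fun p => by
    obtain ⟨i, x⟩ := p
    refine congrArg (Sigma.mk i) (show x + Submodule.Quotient.mk (a.toAdd + b.toAdd)
        = x + Submodule.Quotient.mk b.toAdd + Submodule.Quotient.mk a.toAdd from ?_)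
    rw [Submodule.Quotient.mk_add]
    abel

variable (m : I → M) (hm : ∀ i j, m i - m j ∈ N) (h : annCond N X)

def displacement (y z : QCar N X) : ↥N :=
  ⟨m y.1 - m z.1, hm y.1 z.1⟩ + oneSubT N h y.1 y.2 - oneSubT N h z.1 z.2

variable {s : MedialQuandleStr (QCar N X)}

theorem β_eq_translate_mul_β (hs : s.op = qop N m hm h) (y z : QCar N X) :
    s.β y = translate (displacement m hm h y z) * s.β z := by
  ext1 p
  obtain ⟨i, x⟩ := p
  obtain ⟨x, rfl⟩ := Submodule.Quotient.mk_surjective _ x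
  change s.op _ _ = translate _ (s.op _ _)
  rw [hs]
  refine congrArg (Sigma.mk i) ?_
  simp only [← Submodule.Quotient.mk_smul, ← Submodule.Quotient.mk_add]
  congr 1
  ext
  simp only [displacement, Submodule.coe_add, Submodule.coe_sub]
  abel

theorem dis_le_range_translateHom (hs : s.op = qop N m hm h) :
    s.Dis ≤ (translateHom : Multiplicative ↥N →* _).range := by
  refine (Subgroup.closure_le _).mpr ?_
  rintro _ ⟨y, z, rfl⟩
  exact ⟨.ofAdd (displacement m hm h y z),
    (mul_inv_eq_iff_eq_mul.mpr (β_eq_translate_mul_β m hm h hs y z)).symm⟩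

end QCar

theorem stmt12_general {M : Type*} [AddCommGroup M] [Module Λ M] {I : Type*}
    (N : Submodule Λ M) (m : I → M) (X : I → Submodule Λ ↥N)
    (hm : ∀ i j, m i - m j ∈ N) (h : annCond N X)
    (s : MedialQuandleStr (QCar N X)) (hs : s.op = qop N m hm h) :
    ∀ d ∈ s.Dis, ∃ n : ↥N, ∀ (i : I) (x : ↥N ⧸ X i),
      d ⟨i, x⟩ = ⟨i, x + Submodule.Quotient.mk n⟩ := by
  intro d hd
  obtain ⟨n, rfl⟩ := QCar.dis_le_range_translateHom m hm h hs hd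
  exact ⟨n.toAdd, fun i x => rfl⟩

/-- Every displacement `d` of the quandle `Q(N,(m_i),(X_i))` is of the
form `d(x) = x + n + X_i` for a single element `n ∈ N` (the same `n` for all orbits).
Here `s` is the medial quandle structure on the carrier whose operation is `qop`. -/
theorem stmt12 {M : Type*} [AddCommGroup M] [Module Λ M] {I : Type*} [Nonempty I]
    (N : Submodule Λ M) (m : I → M) (X : I → Submodule Λ ↥N)
    (hm : ∀ i j, m i - m j ∈ N) (h : annCond N X)
    (s : MedialQuandleStr (QCar N X)) (hs : s.op = qop N m hm h) :
    ∀ d ∈ s.Dis, ∃ n : ↥N, ∀ (i : I) (x : ↥N ⧸ X i),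
      d ⟨i, x⟩ = ⟨i, x + Submodule.Quotient.mk n⟩ :=
  stmt12_general N m X hm h s hs
end
end

section
/- Let Q = Q(N,(m_i),(X_i)) be the quandle of the construction, and let N′ be the set of n ∈ N such that the formula d(x) = x + n + X_i (for all i ∈ I and x ∈ Q_i) defines a displacement of Q. Then N′ is a Λ-submodule of N, and the map N′ → Dis(Q) sending n to the displacement d_n given by d_n(x) = x + n + X_i is a surjective Λ-linear homomorphism (with respect to the Λ-module structure on Dis(Q)). -/
open LaurentPolynomial

set_option synthInstance.maxHeartbeats 1000000
set_option maxHeartbeats 1000000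

noncomputable section

/-! On every component `Q_i` each translation `β_q` is affine, `x ↦ t·x + c_q`, with the same
linear part `t` for all `q`. Hence an elementary displacement `β_y β_z⁻¹` is the translation by
one fixed vector of `N` on all components, and so is every element of `Dis(Q)`. Mediality gives
`β_q β_y β_q⁻¹ = β_{β_q y}`, so conjugation by `β_q` maps `Dis(Q)` onto itself; it turns the
translation by `n` into the translation by `t·n`, so the admissible `n` are closed under `t` and
`t⁻¹`, which makes them a `Λ`-submodule. -/

namespace MedialQuandleStr

variable {Q : Type*} (s : MedialQuandleStr Q)

theorem op_right_distrib (x y z : Q) : s.op (s.op x y) z = s.op (s.op x z) (s.op y z) := by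
  simpa only [s.idem] using s.medial x y z z

theorem β_mul_β_mul_inv (q y : Q) : s.β q * s.β y * (s.β q)⁻¹ = s.β (s.β q y) := by
  have hcomm : s.β q * s.β y = s.β (s.β q y) * s.β q := by
    ext x
    exact s.op_right_distrib x y q
  rw [hcomm, mul_inv_cancel_right]

theorem β_mem_normalizer_Dis (q : Q) :
    s.β q ∈ Subgroup.normalizer (s.Dis : Set (Equiv.Perm Q)) := by
  refine Subgroup.normalizer_le_normalizer_closure _ ?_
  have hconj (y z : Q) : MulAut.conj (s.β q) (s.β y * (s.β z)⁻¹)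
      = s.β (s.β q y) * (s.β (s.β q z))⁻¹ := by
    rw [MulAut.conj_apply, ← s.β_mul_β_mul_inv, ← s.β_mul_β_mul_inv]
    group
  rw [Subgroup.mem_normalizer_iff_conj_image_eq]
  ext d
  constructor
  · rintro ⟨_, ⟨y, z, rfl⟩, rfl⟩
    exact ⟨_, _, hconj y z⟩
  · rintro ⟨y, z, rfl⟩
    refine ⟨_, ⟨(s.β q)⁻¹ y, (s.β q)⁻¹ z, rfl⟩, ?_⟩
    simp only [hconj, Equiv.Perm.coe_inv, Equiv.apply_symm_apply]

end MedialQuandleStr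

namespace AddSubgroup

variable {V : Type*} [AddCommGroup V] [Module Λ V] (P : AddSubgroup V)

theorem T_smul_mem (ht : ∀ v ∈ P, tL • v ∈ P)
    (ht' : ∀ v ∈ P, (T (-1) : Λ) • v ∈ P) (k : ℤ) {v : V} (hv : v ∈ P) : (T k : Λ) • v ∈ P := by
  induction k using Int.induction_on generalizing v with
  | zero => simpa using hv
  | succ k ih =>
    rw [add_comm, T_add, mul_smul]
    exact ht _ (ih hv)
  | pred k ih =>
    rw [sub_eq_neg_add, T_add, mul_smul]
    exact ht' _ (ih hv)

theorem laurent_smul_mem (ht : ∀ v ∈ P, tL • v ∈ P)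
    (ht' : ∀ v ∈ P, (T (-1) : Λ) • v ∈ P) (r : Λ) {v : V} (hv : v ∈ P) : r • v ∈ P := by
  induction r using LaurentPolynomial.induction_on' with
  | add p q hp hq => rw [add_smul]; exact P.add_mem hp hq
  | C_mul_T k a =>
    rw [mul_smul, eq_intCast (C : ℤ →+* Λ), Int.cast_smul_eq_zsmul]
    exact P.zsmul_mem (P.T_smul_mem ht ht' k hv) a

def toLaurentSubmodule (ht : ∀ v ∈ P, tL • v ∈ P)
    (ht' : ∀ v ∈ P, (T (-1) : Λ) • v ∈ P) : Submodule Λ V :=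
  { P with smul_mem' := fun r _ hv => P.laurent_smul_mem ht ht' r hv }

theorem mem_toLaurentSubmodule (ht : ∀ v ∈ P, tL • v ∈ P)
    (ht' : ∀ v ∈ P, (T (-1) : Λ) • v ∈ P) {v : V} :
    v ∈ P.toLaurentSubmodule ht ht' ↔ v ∈ P :=
  Iff.rfl

end AddSubgroup

section Construction

variable {M : Type*} [AddCommGroup M] [Module Λ M] {I : Type*} {N : Submodule Λ M}
  {X : I → Submodule Λ ↥N}

-- `QCar` is a plain `def`, so `⟨i, x⟩` elaborates at the underlying `Sigma` type and `rw` then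
-- fails on ill-typed motives; `QCar.mk` keeps points typed in `QCar N X`.
def QCar.mk (i : I) (x : ↥N ⧸ X i) : QCar N X := ⟨i, x⟩

@[elab_as_elim]
theorem QCar.ind {motive : QCar N X → Prop} (mk : ∀ i x, motive (QCar.mk i x)) (q : QCar N X) :
    motive q :=
  match q with
  | ⟨i, x⟩ => mk i x

theorem QCar.perm_ext {d d' : Equiv.Perm (QCar N X)}
    (hd : ∀ i x, d (QCar.mk i x) = d' (QCar.mk i x)) : d = d' :=
  Equiv.ext (QCar.ind hd)

variable (X) in
def translation (n : ↥N) : Equiv.Perm (QCar N X) :=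
  Equiv.sigmaCongrRight fun _ => Equiv.addRight (Submodule.Quotient.mk n)

theorem translation_mk (n : ↥N) (i : I) (x : ↥N ⧸ X i) :
    translation X n (QCar.mk i x) = QCar.mk i (x + Submodule.Quotient.mk n) := rfl

theorem eq_translation_iff {d : Equiv.Perm (QCar N X)} {n : ↥N} :
    d = translation X n ↔
      ∀ (i : I) (x : ↥N ⧸ X i), d ⟨i, x⟩ = ⟨i, x + Submodule.Quotient.mk n⟩ :=
  ⟨fun hd _ _ => by rw [hd]; rfl, fun hd => QCar.perm_ext fun i x => hd i x⟩

theorem translation_add (n n' : ↥N) :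
    translation X (n + n') = translation X n * translation X n' :=
  QCar.perm_ext fun i x => by
    rw [Equiv.Perm.mul_apply, translation_mk, translation_mk, translation_mk, add_comm n,
      Submodule.Quotient.mk_add, add_assoc]

variable (X) in
theorem translation_zero : translation X (0 : ↥N) = 1 :=
  QCar.perm_ext fun i x => by
    rw [translation_mk, Submodule.Quotient.mk_zero, add_zero, Equiv.Perm.one_apply]

theorem translation_neg (n : ↥N) : translation X (-n) = (translation X n)⁻¹ := by
  rw [eq_inv_iff_mul_eq_one, ← translation_add, neg_add_cancel, translation_zero]

variable (X) in
def translationAddSubgroup (s : MedialQuandleStr (QCar N X)) : AddSubgroup ↥N where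
  carrier := {n | translation X n ∈ s.Dis}
  add_mem' {a b} ha hb := by
    change translation X (a + b) ∈ s.Dis
    rw [translation_add]
    exact mul_mem ha hb
  zero_mem' := by
    change translation X 0 ∈ s.Dis
    rw [translation_zero]
    exact one_mem _
  neg_mem' {a} ha := by
    change translation X (-a) ∈ s.Dis
    rw [translation_neg]
    exact inv_mem ha

theorem mem_translationAddSubgroup {s : MedialQuandleStr (QCar N X)} {n : ↥N} :
    n ∈ translationAddSubgroup X s ↔ translation X n ∈ s.Dis := Iff.rfl

variable (m : I → M) (hm : ∀ i j, m i - m j ∈ N) (h : annCond N X)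
  {s : MedialQuandleStr (QCar N X)}

theorem β_mk_apply_mk (hs : s.op = qop N m hm h) (j : I) (y : ↥N ⧸ X j) (i : I)
    (x : ↥N ⧸ X i) :
    s.β (QCar.mk j y) (QCar.mk i x) = QCar.mk i (Submodule.Quotient.mk ⟨m j - m i, hm j i⟩
      + tL • x + Submodule.Quotient.mk (oneSubT N h j y)) := by
  change s.op _ _ = _
  rw [hs]
  rfl

theorem β_mul_translation (hs : s.op = qop N m hm h) (q : QCar N X) (n : ↥N) :
    s.β q * translation X n = translation X (tL • n) * s.β q := by
  induction q using QCar.ind with | mk j y => ?_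
  refine QCar.perm_ext fun i x => ?_
  rw [Equiv.Perm.mul_apply, Equiv.Perm.mul_apply, translation_mk, β_mk_apply_mk m hm h hs,
    β_mk_apply_mk m hm h hs, translation_mk, smul_add, Submodule.Quotient.mk_smul]
  abel_nf

theorem exists_β_eq_translation_mul_β (hs : s.op = qop N m hm h) (y z : QCar N X) :
    ∃ n : ↥N, s.β y = translation X n * s.β z := by
  induction y using QCar.ind with | mk j y => ?_
  induction z using QCar.ind with | mk k z => ?_
  refine ⟨⟨m j - m k, hm j k⟩ + oneSubT N h j y - oneSubT N h k z, QCar.perm_ext fun i x => ?_⟩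
  have hsplit : (⟨m j - m i, hm j i⟩ : ↥N) = ⟨m k - m i, hm k i⟩ + ⟨m j - m k, hm j k⟩ :=
    Subtype.ext (sub_add_sub_cancel' _ _ _).symm
  rw [Equiv.Perm.mul_apply, β_mk_apply_mk m hm h hs, β_mk_apply_mk m hm h hs, translation_mk,
    hsplit]
  simp only [Submodule.Quotient.mk_add, Submodule.Quotient.mk_sub]
  abel_nf

theorem exists_eq_translation_of_mem_Dis (hs : s.op = qop N m hm h) {d : Equiv.Perm (QCar N X)}
    (hd : d ∈ s.Dis) : ∃ n : ↥N, d = translation X n := by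
  induction hd using Subgroup.closure_induction with
  | mem _ hg =>
    obtain ⟨y, z, rfl⟩ := hg
    obtain ⟨n, hn⟩ := exists_β_eq_translation_mul_β m hm h hs y z
    exact ⟨n, by rw [hn, mul_inv_cancel_right]⟩
  | one => exact ⟨0, (translation_zero X).symm⟩
  | mul _ _ _ _ ha hb =>
    obtain ⟨⟨n, rfl⟩, ⟨n', rfl⟩⟩ := And.intro ha hb
    exact ⟨n + n', (translation_add n n').symm⟩
  | inv _ _ ha =>
    obtain ⟨n, rfl⟩ := ha
    exact ⟨-n, (translation_neg n).symm⟩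

theorem translation_T_smul_mem_Dis_iff (hs : s.op = qop N m hm h) (q : QCar N X) (n : ↥N) :
    translation X (tL • n) ∈ s.Dis ↔ translation X n ∈ s.Dis := by
  rw [← mul_inv_eq_of_eq_mul (β_mul_translation m hm h hs q n)]
  exact ((Subgroup.mem_normalizer_iff.mp (s.β_mem_normalizer_Dis q)) _).symm

end Construction

/-- Let `Q = Q(N,(m_i),(X_i))` (with medial quandle structure `s`
whose operation is `qop`), and let `N'` be the set of `n ∈ N` such that
`d(x) = x + n + X_i` defines a displacement of `Q`. Then `N'` is a `Λ`-submodule of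
`N`, and `n ↦ d_n` is a surjective `Λ`-linear homomorphism `N' → Dis(Q)`: it is
surjective, carries addition to composition, and carries scalar multiplication by `t` to
conjugation by a translation. -/
theorem stmt13 {M : Type*} [AddCommGroup M] [Module Λ M] {I : Type*} [Nonempty I]
    (N : Submodule Λ M) (m : I → M) (X : I → Submodule Λ ↥N)
    (hm : ∀ i j, m i - m j ∈ N) (h : annCond N X)
    (s : MedialQuandleStr (QCar N X)) (hs : s.op = qop N m hm h) :
    (∃ P : Submodule Λ ↥N, ∀ n : ↥N,
      n ∈ P ↔ ∃ d ∈ s.Dis, ∀ (i : I) (x : ↥N ⧸ X i),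
        d ⟨i, x⟩ = ⟨i, x + Submodule.Quotient.mk n⟩) ∧
    (∀ d ∈ s.Dis, ∃ n : ↥N, ∀ (i : I) (x : ↥N ⧸ X i),
      d ⟨i, x⟩ = ⟨i, x + Submodule.Quotient.mk n⟩) ∧
    (∀ (n n' : ↥N) (dn dn' : Equiv.Perm (QCar N X)),
      (∀ (i : I) (x : ↥N ⧸ X i), dn ⟨i, x⟩ = ⟨i, x + Submodule.Quotient.mk n⟩) →
      (∀ (i : I) (x : ↥N ⧸ X i), dn' ⟨i, x⟩ = ⟨i, x + Submodule.Quotient.mk n'⟩) →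
      ∀ (i : I) (x : ↥N ⧸ X i),
        (dn * dn') ⟨i, x⟩ = ⟨i, x + Submodule.Quotient.mk (n + n')⟩) ∧
    (∀ (n : ↥N) (dn : Equiv.Perm (QCar N X)) (q₀ : QCar N X),
      (∀ (i : I) (x : ↥N ⧸ X i), dn ⟨i, x⟩ = ⟨i, x + Submodule.Quotient.mk n⟩) →
      ∀ (i : I) (x : ↥N ⧸ X i),
        (s.β q₀ * dn * (s.β q₀)⁻¹) ⟨i, x⟩ = ⟨i, x + Submodule.Quotient.mk (tL • n)⟩) := by
  obtain ⟨i₀⟩ := ‹Nonempty I›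
  set P := translationAddSubgroup X s
  have hT (n : ↥N) : tL • n ∈ P ↔ n ∈ P :=
    translation_T_smul_mem_Dis_iff m hm h hs (QCar.mk i₀ 0) n
  have hT_inv (n : ↥N) : (T (-1) : Λ) • n ∈ P ↔ n ∈ P := by
    rw [← hT, smul_smul, ← T_add, add_neg_cancel, T_zero, one_smul]
  refine ⟨⟨P.toLaurentSubmodule (fun n => (hT n).mpr) (fun n => (hT_inv n).mpr), fun n => ?_⟩,
    fun d hd => ?_, fun n n' dn dn' hn hn' => ?_, fun n dn q₀ hn => ?_⟩
  · rw [AddSubgroup.mem_toLaurentSubmodule, mem_translationAddSubgroup]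
    simp only [← eq_translation_iff, exists_eq_right]
  · simpa only [← eq_translation_iff] using exists_eq_translation_of_mem_Dis m hm h hs hd
  · rw [← eq_translation_iff] at hn hn' ⊢
    rw [translation_add, hn, hn']
  · rw [← eq_translation_iff] at hn ⊢
    rw [hn, β_mul_translation m hm h hs, mul_inv_cancel_right]
end
end

section
/- Every quasi-affine quandle is semiregular; in particular, every subquandle of the affine quandle on a Λ-module M is semiregular, and every displacement of such a subquandle is of the form x ↦ x + m for some m ∈ M. -/
open LaurentPolynomial

set_option synthInstance.maxHeartbeats 1000000
set_option maxHeartbeats 1000000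

noncomputable section

/-!
A displacement `β_y β_z⁻¹` of a subquandle of an affine quandle is the translation by
`(1-t)(y - z)`, since `β_y` and `β_z` have the same linear part `x ↦ t·x`. Hence every
displacement is a translation, and a translation with a fixed point is the identity.
-/

section TranslationSubgroup

variable {Q M : Type*} [AddCommGroup M]

def translationSubgroup (g : Q → M) : Subgroup (Equiv.Perm Q) where
  carrier := {d | ∃ v : M, ∀ x, g (d x) = g x + v}
  one_mem' := ⟨0, fun x => by simp⟩
  mul_mem' := by
    rintro a b ⟨va, hva⟩ ⟨vb, hvb⟩
    exact ⟨vb + va, fun x => by rw [Equiv.Perm.mul_apply, hva, hvb, add_assoc]⟩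
  inv_mem' := by
    rintro a ⟨va, hva⟩
    refine ⟨-va, fun x => ?_⟩
    obtain ⟨w, rfl⟩ := a.surjective x
    simp [hva]

theorem eq_one_of_mem_translationSubgroup_of_apply_eq {g : Q → M}
    (hg : Function.Injective g) {d : Equiv.Perm Q} (hd : d ∈ translationSubgroup g)
    {x : Q} (hx : d x = x) : d = 1 := by
  obtain ⟨v, hv⟩ := hd
  have hv0 : v = 0 := by simpa [hx] using hv x
  ext y
  exact hg (by rw [hv y, hv0, add_zero, Equiv.Perm.one_apply])

end TranslationSubgroup

namespace MedialQuandleStr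

variable {Q M R : Type*} (s : MedialQuandleStr Q) [Ring R] [AddCommGroup M] [Module R M]
  {g : Q → M} {t : R}

theorem β_mul_β_inv_mem_translationSubgroup
    (hhom : ∀ x y, g (s.op x y) = t • g x + (1 - t) • g y) (y z : Q) :
    s.β y * (s.β z)⁻¹ ∈ translationSubgroup g := by
  refine ⟨(1 - t) • g y - (1 - t) • g z, fun x => ?_⟩
  obtain ⟨w, rfl⟩ := (s.β z).surjective x
  rw [Equiv.Perm.mul_apply, Equiv.Perm.inv_def, Equiv.symm_apply_apply]
  change g (s.op w y) = g (s.op w z) + _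
  rw [hhom, hhom]
  abel

theorem Dis_le_translationSubgroup
    (hhom : ∀ x y, g (s.op x y) = t • g x + (1 - t) • g y) :
    s.Dis ≤ translationSubgroup g :=
  Subgroup.closure_le _ |>.mpr <| by
    rintro _ ⟨y, z, rfl⟩
    exact s.β_mul_β_inv_mem_translationSubgroup hhom y z

end MedialQuandleStr

/-- Every quasi-affine quandle is semiregular. Here a quasi-affine
quandle is a quandle `Q` isomorphic (via an injective map `g` preserving the operation)
to a subquandle of the affine quandle `x ▷ y = t·x + (1-t)·y` on a `Λ`-module `M`.
Every displacement of such a quandle is of the form `x ↦ x + v` (read through `g`),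
and the only displacement with a fixed point is the identity. -/
theorem stmt15 {Q : Type*} (s : MedialQuandleStr Q)
    {M : Type*} [AddCommGroup M] [Module Λ M]
    (g : Q → M) (hg : Function.Injective g)
    (hhom : ∀ x y, g (s.op x y) = tL • g x + (1 - tL) • g y) :
    (∀ d ∈ s.Dis, ∃ v : M, ∀ x, g (d x) = g x + v) ∧
    (∀ d ∈ s.Dis, (∃ x, d x = x) → d = 1) :=
  ⟨fun _ hd => s.Dis_le_translationSubgroup hhom hd,
    fun _ hd ⟨_, hx⟩ =>
      eq_one_of_mem_translationSubgroup_of_apply_eq hg (s.Dis_le_translationSubgroup hhom hd) hx⟩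
end
end

section
/- Let Q = Q(N,(m_i),(X_i)) be the quandle of the construction. Then the map f: Q → M defined by f(x) = m_i + (1−t)·x for x ∈ Q_i is well defined (it does not depend on the choice of coset representative, since (1−t)·X_i = 0) and is a quandle homomorphism from Q into the affine quandle on M; that is, f(x ▷ y) = t·f(x) + (1−t)·f(y) for all x, y ∈ Q. -/
open LaurentPolynomial

set_option synthInstance.maxHeartbeats 1000000
set_option maxHeartbeats 1000000

noncomputable section

/-- The natural map `f : Q(N,(m_i),(X_i)) → M` given on `Q_i` by
`f(x) = m_i + (1-t)·x` is well defined (it exists as a function on the quotients, since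
`(1-t)·X_i = 0`) and is a quandle homomorphism into the affine quandle on `M`:
`f(x ▷ y) = t·f(x) + (1-t)·f(y)`. -/
theorem stmt16 {M : Type*} [AddCommGroup M] [Module Λ M] {I : Type*} [Nonempty I]
    (N : Submodule Λ M) (m : I → M) (X : I → Submodule Λ ↥N)
    (hm : ∀ i j, m i - m j ∈ N) (h : annCond N X) :
    ∃ f : QCar N X → M,
      (∀ (i : I) (a : ↥N),
        f ⟨i, Submodule.Quotient.mk a⟩ = m i + (1 - tL) • (a : M)) ∧
      (∀ x y, f (qop N m hm h x y) = tL • f x + (1 - tL) • f y) := by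
  refine ⟨fun x => m x.1 + ((oneSubT N h x.1 x.2 : ↥N) : M), ?_, ?_⟩
  · intro i a
    simp [oneSubT]
  · rintro ⟨i, x⟩ ⟨j, y⟩
    obtain ⟨a, rfl⟩ := Submodule.Quotient.mk_surjective _ x
    obtain ⟨b, rfl⟩ := Submodule.Quotient.mk_surjective _ y
    show m i + ((oneSubT N h i (Submodule.Quotient.mk (⟨m j - m i, hm j i⟩ : ↥N)
        + tL • Submodule.Quotient.mk a
        + Submodule.Quotient.mk (oneSubT N h j (Submodule.Quotient.mk b))) : ↥N) : M) = _
    simp only [oneSubT, Submodule.liftQ_apply, map_add, map_smul, LinearMap.smul_apply,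
      LinearMap.id_apply, Submodule.coe_add, Submodule.coe_smul, Submodule.coe_mk,
      AddSubmonoid.coe_add, SetLike.val_smul]
    show m i + ((1 - tL) • (m j - m i) + tL • ((1 - tL) • (a : M))
        + (1 - tL) • ((1 - tL) • (b : M)))
      = tL • (m i + (1 - tL) • (a : M)) + (1 - tL) • (m j + (1 - tL) • (b : M))
    module
end
end
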